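/- For a finite field F_q, the generating function of the number of monic square-full polynomials satisfies: the sum over n ≥ 0 of (number of monic square-full polynomials of degree n in F_q[T]) times u^n equals Z(u^2)Z(u^3)/Z(u^6), where Z(u) = 1/(1-qu) is the zeta function of F_q[T]. -/

import Mathlib

/-!
Every monic `f` factors uniquely as `f = g² s` with `s` squarefree and monic, which gives
`Z(u) = Z(u²) S(u)` for the generating function `S` of squarefree monics, i.e.
`S(u) = Z(u) / Z(u²)`. A monic `f` is square-full exactly when it factors, again uniquely, as
`f = a² b³` with `b` squarefree, so its generating function is
`Z(u²) S(u³) = Z(u²) Z(u³) / Z(u⁶)`. In both factorizations the exponent of a prime in the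
squarefree factor is the parity of its exponent in `f`, which is what makes them unique.
-/

def IsSquareFullPoly {F : Type*} [Field F] (f : Polynomial F) : Prop :=
  ∀ P : Polynomial F, Irreducible P → P ∣ f → P ^ 2 ∣ f

open PowerSeries

section GradedSeries

open Finset.HasAntidiagonal

variable (R : Type*) {α β : Type*}

/-- `Nat.card` is `0` on an infinite fibre, so this is only meaningful for finite fibres. -/
noncomputable def gradedSeries [CommSemiring R] (d : α → ℕ) : R⟦X⟧ :=
  mk fun n => Nat.card {a // d a = n}

variable {R}

theorem gradedSeries_congr [CommSemiring R] (e : α ≃ β) {d : α → ℕ} {d' : β → ℕ}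
    (h : ∀ a, d' (e a) = d a) : gradedSeries R d' = gradedSeries R d := by
  ext n
  simp only [gradedSeries, coeff_mk]
  rw [Nat.card_congr (e.subtypeEquiv (p := fun a => d a = n) (q := fun b => d' b = n)
    fun a => by rw [h a])]

theorem gradedSeries_add [CommSemiring R] (d₁ : α → ℕ) (d₂ : β → ℕ)
    [∀ n, Finite {a // d₁ a = n}] [∀ n, Finite {b // d₂ b = n}] :
    gradedSeries R (fun x : α × β => d₁ x.1 + d₂ x.2) =
      gradedSeries R d₁ * gradedSeries R d₂ := by
  ext n
  let e : {x : α × β // d₁ x.1 + d₂ x.2 = n} ≃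
      Σ ij : antidiagonal n, {a // d₁ a = ij.1.1} × {b // d₂ b = ij.1.2} :=
    { toFun x := ⟨⟨(d₁ x.1.1, d₂ x.1.2), mem_antidiagonal.mpr x.2⟩,
        ⟨x.1.1, rfl⟩, ⟨x.1.2, rfl⟩⟩
      invFun y := ⟨(y.2.1, y.2.2), by
        rw [y.2.1.2, y.2.2.2]; exact mem_antidiagonal.mp y.1.2⟩
      left_inv _ := rfl
      right_inv := by
        rintro ⟨⟨⟨i, j⟩, hij⟩, ⟨a, rfl : d₁ a = i⟩, ⟨b, rfl : d₂ b = j⟩⟩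
        rfl }
  simp only [gradedSeries, coeff_mk, coeff_mul]
  rw [Nat.card_congr e, Nat.card_sigma]
  push_cast [Nat.card_prod]
  exact Finset.sum_coe_sort _ fun ij : ℕ × ℕ =>
    (Nat.card {a // d₁ a = ij.1} : R) * Nat.card {b // d₂ b = ij.2}

theorem finite_fiber_const_mul {d : α → ℕ} [∀ n, Finite {a // d a = n}] {k : ℕ}
    (hk : k ≠ 0) (n : ℕ) : Finite {a // k * d a = n} :=
  Finite.of_injective (β := {a // d a = n / k})
    (fun a => ⟨a.1, by
      obtain ⟨a, rfl⟩ := a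
      exact (Nat.mul_div_cancel_left _ (Nat.pos_of_ne_zero hk)).symm⟩)
    fun _ _ h => Subtype.ext (congrArg (fun b : {a // d a = n / k} => b.1) h)

theorem gradedSeries_const_mul [CommRing R] (d : α → ℕ) {k : ℕ} (hk : k ≠ 0) :
    gradedSeries R (fun a => k * d a) = expand k hk (gradedSeries R d) := by
  ext n
  simp only [gradedSeries, coeff_expand, coeff_mk]
  split_ifs with h
  · obtain ⟨m, rfl⟩ := h
    rw [Nat.mul_div_cancel_left m (Nat.pos_of_ne_zero hk)]
    simp only [mul_right_inj' hk]
  · have : IsEmpty {a // k * d a = n} := ⟨fun a => h ⟨d a.1, a.2.symm⟩⟩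
    simp

end GradedSeries

section GeometricSeries

variable {R : Type*} [CommRing R] (a : R)

theorem mk_pow_mul_one_sub_C_mul_X : (mk fun n => a ^ n) * (1 - C a * X) = 1 := by
  simpa [rescale_mk, rescale_X] using congrArg (rescale a) (mk_one_mul_one_sub_eq_one R)

theorem expand_mk_pow_mul_one_sub {k : ℕ} (hk : k ≠ 0) :
    expand k hk (mk fun n => a ^ n) * (1 - C a * X ^ k) = 1 := by
  simpa [expand_C, expand_X] using congrArg (expand k hk) (mk_pow_mul_one_sub_C_mul_X a)

theorem expand_mk_pow_eq_inv {K : Type*} [Field K] (a : K) {k : ℕ} (hk : k ≠ 0) :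
    expand k hk (mk fun n => a ^ n) = (1 - C a * X ^ k)⁻¹ :=
  (PowerSeries.eq_inv_iff_mul_eq_one (by simp [hk])).mpr (expand_mk_pow_mul_one_sub a hk)

end GeometricSeries

section Decomposition

variable {α : Type*} [CommMonoidWithZero α] [UniqueFactorizationMonoid α]

theorem Squarefree.dvd_of_forall_irreducible_dvd {s g : α} (hs : Squarefree s)
    (h : ∀ p, Irreducible p → p ∣ s → p ∣ g) : s ∣ g := by
  nontriviality α
  induction s using WfDvdMonoid.induction_on_irreducible with
  | zero => exact absurd hs not_squarefree_zero
  | unit u hu => exact hu.dvd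
  | mul z p _ hp ih =>
    obtain ⟨hpz, -, hz⟩ := squarefree_mul_iff.mp hs
    exact hpz.mul_dvd (h p hp (dvd_mul_right p z))
      (ih hz fun q hq hqz => h q hq (dvd_mul_of_dvd_right hqz p))

theorem exists_sq_mul_squarefree {x : α} (hx : x ≠ 0) :
    ∃ g s : α, Squarefree s ∧ x = g ^ 2 * s := by
  induction x using WfDvdMonoid.induction_on_irreducible with
  | zero => exact absurd rfl hx
  | unit u hu => exact ⟨1, u, hu.squarefree, by rw [one_pow, one_mul]⟩
  | mul z p hz hp ih =>
    obtain ⟨g, s, hs, rfl⟩ := ih hz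
    by_cases hps : p ∣ s
    · obtain ⟨t, rfl⟩ := hps
      exact ⟨p * g, t, hs.of_mul_right, by rw [mul_pow, sq p]; ac_rfl⟩
    · refine ⟨g, p * s, ?_, mul_left_comm p _ s⟩
      exact squarefree_mul_iff.mpr ⟨hp.isRelPrime_iff_not_dvd.mpr hps, hp.squarefree, hs⟩

theorem exists_sq_mul_cube_squarefree {x : α} (hx : x ≠ 0)
    (hsf : ∀ p, Irreducible p → p ∣ x → p ^ 2 ∣ x) :
    ∃ a b : α, Squarefree b ∧ x = a ^ 2 * b ^ 3 := by
  obtain ⟨g, s, hs, rfl⟩ := exists_sq_mul_squarefree hx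
  -- a prime `p ∣ s` divides `s` only once, so `p ^ 2 ∣ g ^ 2 * s` forces `p ∣ g`
  have hsg : s ∣ g := hs.dvd_of_forall_irreducible_dvd fun p hp hps => by
    obtain ⟨t, rfl⟩ := hps
    have hpt : ¬p ∣ t := fun hpt => hp.not_isUnit (hs p (mul_dvd_mul_left p hpt))
    have hp2 : p * p ∣ p * (g ^ 2 * t) := by
      rw [← sq, mul_left_comm]
      exact hsf p hp (dvd_mul_of_dvd_right (dvd_mul_right p t) _)
    have hpgt := (mul_dvd_mul_iff_left hp.ne_zero).mp hp2
    exact hp.prime.dvd_of_dvd_pow ((hp.prime.dvd_or_dvd hpgt).resolve_right hpt)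
  obtain ⟨a, rfl⟩ := hsg
  exact ⟨a, s, hs, by rw [mul_pow, pow_succ s 2]; ac_rfl⟩

theorem Irreducible.sq_dvd_sq_mul_cube {p : α} (hp : Irreducible p) {a b : α}
    (h : p ∣ a ^ 2 * b ^ 3) : p ^ 2 ∣ a ^ 2 * b ^ 3 := by
  rcases hp.prime.dvd_or_dvd h with ha | hb
  · exact dvd_mul_of_dvd_left (pow_dvd_pow_of_dvd (hp.prime.dvd_of_dvd_pow ha) 2) _
  · exact dvd_mul_of_dvd_right
      ((pow_dvd_pow_of_dvd (hp.prime.dvd_of_dvd_pow hb) 2).trans (pow_dvd_pow b (by norm_num))) _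

open UniqueFactorizationMonoid in
theorem sq_mul_pow_injective [NormalizationMonoid α] {j : ℕ} (hj : Odd j) {a b a' b' : α}
    (ha : a ≠ 0) (ha' : a' ≠ 0) (hna : normalize a = a) (hna' : normalize a' = a')
    (hnb : normalize b = b) (hnb' : normalize b' = b') (hb : Squarefree b) (hb' : Squarefree b')
    (h : a ^ 2 * b ^ j = a' ^ 2 * b' ^ j) : a = a' ∧ b = b' := by
  classical
  nontriviality α
  have hnf : 2 • normalizedFactors a + j • normalizedFactors b =
      2 • normalizedFactors a' + j • normalizedFactors b' := by
    have := congrArg normalizedFactors h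
    rwa [normalizedFactors_mul (pow_ne_zero _ ha) (pow_ne_zero _ hb.ne_zero),
      normalizedFactors_mul (pow_ne_zero _ ha') (pow_ne_zero _ hb'.ne_zero),
      normalizedFactors_pow, normalizedFactors_pow, normalizedFactors_pow,
      normalizedFactors_pow] at this
  have hb1 := Multiset.nodup_iff_count_le_one.mp
    ((squarefree_iff_nodup_normalizedFactors hb.ne_zero).mp hb)
  have hb1' := Multiset.nodup_iff_count_le_one.mp
    ((squarefree_iff_nodup_normalizedFactors hb'.ne_zero).mp hb')
  -- the exponent of `p` in `b` is the parity of its exponent in `a ^ 2 * b ^ j`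
  have hcount : ∀ p, (normalizedFactors a).count p = (normalizedFactors a').count p ∧
      (normalizedFactors b).count p = (normalizedFactors b').count p := by
    intro p
    have hp := congrArg (Multiset.count p) hnf
    simp only [Multiset.count_add, Multiset.count_nsmul] at hp
    obtain ⟨k, rfl⟩ := hj
    have := hb1 p
    have := hb1' p
    interval_cases (normalizedFactors b).count p <;>
      interval_cases (normalizedFactors b').count p <;> omega
  have eq_of_normalizedFactors_eq {x y : α} (hx : x ≠ 0) (hy : y ≠ 0) (hnx : normalize x = x)
      (hny : normalize y = y) (hxy : normalizedFactors x = normalizedFactors y) : x = y :=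
    ((associated_iff_normalizedFactors_eq_normalizedFactors hx hy).mpr hxy).eq_of_normalized hnx hny
  exact ⟨eq_of_normalizedFactors_eq ha ha' hna hna' (Multiset.ext.mpr fun p => (hcount p).1),
    eq_of_normalizedFactors_eq hb.ne_zero hb'.ne_zero hnb hnb'
      (Multiset.ext.mpr fun p => (hcount p).2)⟩

end Decomposition

open Polynomial

section MonicSeries

variable {F : Type*} [Field F]

noncomputable def monicSeries (R : Type*) [CommSemiring R] (P : F[X] → Prop) : R⟦X⟧ :=
  PowerSeries.mk fun n => Nat.card {f : F[X] // f.Monic ∧ f.natDegree = n ∧ P f}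

theorem monicSeries_eq_gradedSeries (R : Type*) [CommSemiring R] (P : F[X] → Prop) :
    monicSeries R P = gradedSeries R fun f : {f : F[X] // f.Monic ∧ P f} => f.1.natDegree := by
  ext n
  let e : {f : F[X] // f.Monic ∧ f.natDegree = n ∧ P f} ≃
      {f : {f : F[X] // f.Monic ∧ P f} // f.1.natDegree = n} :=
    { toFun f := ⟨⟨f.1, f.2.1, f.2.2.2⟩, f.2.2.1⟩
      invFun f := ⟨f.1.1, f.1.2.1, f.2, f.1.2.2⟩
      left_inv _ := rfl
      right_inv _ := rfl }
  simp only [monicSeries, gradedSeries, coeff_mk, Nat.card_congr e]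

theorem exists_monic_of_eq_sq_mul_pow {f a b : F[X]} {j : ℕ} (hf : f.Monic) (hb : Squarefree b)
    (h : f = a ^ 2 * b ^ j) :
    ∃ a b : F[X], a.Monic ∧ b.Monic ∧ Squarefree b ∧ f = a ^ 2 * b ^ j := by
  classical
  have ha : a ≠ 0 := by
    rintro rfl
    exact hf.ne_zero (by rw [h, zero_pow two_ne_zero, zero_mul])
  have hmonic : (normalize a ^ 2 * normalize b ^ j).Monic :=
    ((monic_normalize ha).pow 2).mul ((monic_normalize hb.ne_zero).pow j)
  refine ⟨normalize a, normalize b, monic_normalize ha, monic_normalize hb.ne_zero,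
    (normalize_associated b).squarefree_iff.mpr hb, eq_of_monic_of_associated hf hmonic ?_⟩
  rw [h]
  exact ((normalize_associated a).pow_pow.mul_mul (normalize_associated b).pow_pow).symm

theorem isSquareFullPoly_iff_exists_sq_mul_cube {f : F[X]} (hf : f.Monic) :
    IsSquareFullPoly f ↔
      ∃ a b : F[X], a.Monic ∧ b.Monic ∧ Squarefree b ∧ f = a ^ 2 * b ^ 3 := by
  constructor
  · intro hsf
    obtain ⟨a, b, hb, h⟩ := exists_sq_mul_cube_squarefree hf.ne_zero hsf
    exact exists_monic_of_eq_sq_mul_pow hf hb h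
  · rintro ⟨a, b, -, -, -, rfl⟩ p hp
    exact hp.sq_dvd_sq_mul_cube

noncomputable def sqMulPowEquiv {j : ℕ} (hj : Odd j) {P : F[X] → Prop}
    (hP : ∀ f : F[X], f.Monic →
      (P f ↔ ∃ a b : F[X], a.Monic ∧ b.Monic ∧ Squarefree b ∧ f = a ^ 2 * b ^ j)) :
    {a : F[X] // a.Monic ∧ True} × {b : F[X] // b.Monic ∧ Squarefree b} ≃
      {f : F[X] // f.Monic ∧ P f} := by
  classical
  refine Equiv.ofBijective (fun x => ⟨x.1.1 ^ 2 * x.2.1 ^ j, (x.1.2.1.pow 2).mul (x.2.2.1.pow j),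
    (hP _ ((x.1.2.1.pow 2).mul (x.2.2.1.pow j))).mpr
      ⟨x.1.1, x.2.1, x.1.2.1, x.2.2.1, x.2.2.2, rfl⟩⟩) ⟨?_, ?_⟩
  · intro x y h
    replace h : x.1.1 ^ 2 * x.2.1 ^ j = y.1.1 ^ 2 * y.2.1 ^ j := congrArg Subtype.val h
    obtain ⟨⟨a, ha, _⟩, ⟨b, hb, hbs⟩⟩ := x
    obtain ⟨⟨a', ha', _⟩, ⟨b', hb', hbs'⟩⟩ := y
    obtain ⟨rfl, rfl⟩ := sq_mul_pow_injective hj ha.ne_zero ha'.ne_zero ha.normalize_eq_self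
      ha'.normalize_eq_self hb.normalize_eq_self hb'.normalize_eq_self hbs hbs' h
    rfl
  · rintro ⟨f, hf, hPf⟩
    obtain ⟨a, b, ha, hb, hbs, rfl⟩ := (hP f hf).mp hPf
    exact ⟨(⟨a, ha, trivial⟩, ⟨b, hb, hbs⟩), rfl⟩

noncomputable def monicDegreeEquiv (n : ℕ) :
    {f : F[X] // f.Monic ∧ f.natDegree = n} ≃ (Fin n → F) :=
  (monicEquivDegreeLT n).trans (degreeLTEquiv F n).toEquiv

variable [Fintype F]

instance finite_monic_natDegree_eq (P : F[X] → Prop) (n : ℕ) :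
    Finite {f : {f : F[X] // f.Monic ∧ P f} // f.1.natDegree = n} :=
  have := Finite.of_equiv _ (monicDegreeEquiv (F := F) n).symm
  Finite.of_injective (β := {f : F[X] // f.Monic ∧ f.natDegree = n})
    (fun f => ⟨f.1.1, f.1.2.1, f.2⟩) fun _ _ h => Subtype.ext <| Subtype.ext <|
      congrArg (fun f : {f : F[X] // f.Monic ∧ f.natDegree = n} => f.1) h

theorem monicSeries_true (R : Type*) [CommSemiring R] :
    monicSeries R (fun _ : F[X] => True) = PowerSeries.mk fun n => (Fintype.card F : R) ^ n := by
  ext n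
  simp only [monicSeries, coeff_mk, and_true]
  rw [Nat.card_congr (monicDegreeEquiv n), Nat.card_eq_fintype_card, Fintype.card_fun,
    Fintype.card_fin, Nat.cast_pow]

theorem monicSeries_eq_expand_mul_expand (R : Type*) [CommRing R] {j : ℕ} (hj : Odd j)
    {P : F[X] → Prop} (hP : ∀ f : F[X], f.Monic →
      (P f ↔ ∃ a b : F[X], a.Monic ∧ b.Monic ∧ Squarefree b ∧ f = a ^ 2 * b ^ j)) :
    monicSeries R P = PowerSeries.expand 2 two_ne_zero (monicSeries R fun _ : F[X] => True) *
      PowerSeries.expand j hj.pos.ne' (monicSeries R (Squarefree : F[X] → Prop)) := by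
  have := finite_fiber_const_mul (d := fun a : {a : F[X] // a.Monic ∧ True} => a.1.natDegree)
    two_ne_zero
  have := finite_fiber_const_mul
    (d := fun b : {b : F[X] // b.Monic ∧ Squarefree b} => b.1.natDegree) hj.pos.ne'
  rw [monicSeries_eq_gradedSeries, monicSeries_eq_gradedSeries, monicSeries_eq_gradedSeries,
    ← gradedSeries_const_mul, ← gradedSeries_const_mul, ← gradedSeries_add]
  refine gradedSeries_congr (sqMulPowEquiv hj hP) fun x => ?_
  change (x.1.1 ^ 2 * x.2.1 ^ j).natDegree = _
  rw [(x.1.2.1.pow 2).natDegree_mul (x.2.2.1.pow j), natDegree_pow, natDegree_pow]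

theorem monicSeries_squarefree (R : Type*) [CommRing R] :
    monicSeries R (Squarefree : F[X] → Prop) =
      (1 - PowerSeries.C (Fintype.card F : R) * PowerSeries.X ^ 2) *
        PowerSeries.mk fun n => (Fintype.card F : R) ^ n := by
  have h := monicSeries_eq_expand_mul_expand R odd_one (P := fun _ : F[X] => True) fun f hf => by
    obtain ⟨g, s, hs, h⟩ := exists_sq_mul_squarefree hf.ne_zero
    exact iff_of_true trivial (exists_monic_of_eq_sq_mul_pow hf hs (by rw [h, pow_one]))
  rw [PowerSeries.expand_one_apply, monicSeries_true] at h
  set Z := PowerSeries.mk fun n => (Fintype.card F : R) ^ n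
  calc monicSeries R Squarefree
      = (PowerSeries.expand 2 two_ne_zero Z *
          (1 - PowerSeries.C (Fintype.card F : R) * PowerSeries.X ^ 2)) *
            monicSeries R Squarefree := by
        rw [expand_mk_pow_mul_one_sub, one_mul]
    _ = (1 - PowerSeries.C (Fintype.card F : R) * PowerSeries.X ^ 2) *
          (PowerSeries.expand 2 two_ne_zero Z * monicSeries R Squarefree) := by ring
    _ = _ := by rw [← h]

end MonicSeries

/-- The generating function of the number of monic square-full polynomials of degree `n`
over `F_q` equals `Z(u²)Z(u³)/Z(u⁶)` where `Z(u) = 1/(1-qu)`. -/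
theorem squarefull_generating_function (F : Type) [Field F] [Fintype F] :
    (PowerSeries.mk fun n =>
        (Nat.card {f : Polynomial F // f.Monic ∧ f.natDegree = n ∧ IsSquareFullPoly f} : ℚ)) =
      (1 - PowerSeries.C ((Fintype.card F : ℚ)) * PowerSeries.X ^ 2)⁻¹ *
        (1 - PowerSeries.C ((Fintype.card F : ℚ)) * PowerSeries.X ^ 3)⁻¹ *
        (1 - PowerSeries.C ((Fintype.card F : ℚ)) * PowerSeries.X ^ 6) := by
  change monicSeries ℚ IsSquareFullPoly = _
  rw [monicSeries_eq_expand_mul_expand ℚ (by decide : Odd 3)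
      fun f hf => isSquareFullPoly_iff_exists_sq_mul_cube hf,
    monicSeries_squarefree, monicSeries_true, map_mul, expand_mk_pow_eq_inv, expand_mk_pow_eq_inv,
    map_sub, map_one, map_mul, PowerSeries.expand_C, map_pow, PowerSeries.expand_X, ← pow_mul]
  ring
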